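/- For every ε ≥ 0, the function V_φ(ξ) = -½(1 + 2ε²) + (3/2)ε² sech²(ξ) satisfies the linear inhomogeneous equation L₋ V_φ = (1 - ε²d²/dξ²) φ', where L₋ = -d²/dξ² + 2tanh²(ξ) - 2 and φ'(ξ) = sech²(ξ); explicitly, -V_φ''(ξ) - 2 sech²(ξ) V_φ(ξ) = sech²(ξ) - ε² (sech²)''(ξ) for all real ξ. -/

import Mathlib

/-!
Both sides are polynomials in `sech² ξ`: the constant term of `V_φ` has zero derivative, and
`(sech²)'' = 4 sech² - 6 sech⁴` once `sinh²` is replaced by `cosh² - 1`.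
-/

open Real

theorem hasDerivAt_one_div_cosh_sq (x : ℝ) :
    HasDerivAt (fun x => (1 / cosh x) ^ 2) (-2 * sinh x / cosh x ^ 3) x := by
  have hcosh : cosh x ≠ 0 := (cosh_pos x).ne'
  simp only [one_div]
  refine (((hasDerivAt_cosh x).inv hcosh).pow 2).congr_deriv ?_
  simp only [Pi.inv_apply]
  push_cast
  field_simp

theorem hasDerivAt_neg_two_mul_sinh_div_cosh_cube (x : ℝ) :
    HasDerivAt (fun x => -2 * sinh x / cosh x ^ 3)
      (4 * (1 / cosh x) ^ 2 - 6 * (1 / cosh x) ^ 4) x := by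
  have hcosh : cosh x ≠ 0 := (cosh_pos x).ne'
  refine (((hasDerivAt_sinh x).const_mul (-2)).div ((hasDerivAt_cosh x).pow 3)
    (pow_ne_zero 3 hcosh)).congr_deriv ?_
  simp only [Pi.pow_apply]
  field_simp
  linear_combination 6 * cosh x ^ 2 * sinh_sq x

theorem deriv_deriv_one_div_cosh_sq (x : ℝ) :
    deriv (deriv fun x => (1 / cosh x) ^ 2) x = 4 * (1 / cosh x) ^ 2 - 6 * (1 / cosh x) ^ 4 := by
  rw [funext fun y => (hasDerivAt_one_div_cosh_sq y).deriv]
  exact (hasDerivAt_neg_two_mul_sinh_div_cosh_cube x).deriv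

theorem Vphi_solves_general (ε : ℝ) :
    ∀ ξ : ℝ,
      -(deriv (deriv (fun x : ℝ =>
          -(1/2) * (1 + 2*ε^2) + (3/2) * ε^2 * (1 / Real.cosh x) ^ 2)) ξ)
        - 2 * (1 / Real.cosh ξ) ^ 2 *
            (-(1/2) * (1 + 2*ε^2) + (3/2) * ε^2 * (1 / Real.cosh ξ) ^ 2)
      = (1 / Real.cosh ξ) ^ 2
        - ε^2 * deriv (deriv (fun x : ℝ => (1 / Real.cosh x) ^ 2)) ξ := by
  intro ξ
  simp only [deriv_const_add', deriv_const_mul_field']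
  rw [deriv_deriv_one_div_cosh_sq]
  ring

/-- For every `ε ≥ 0`, the function `V_φ(ξ) = -½(1+2ε²) + (3/2)ε² sech²(ξ)` satisfies
`L₋ V_φ = (1 - ε² d²/dξ²) φ'` with `L₋ = -d²/dξ² - 2 sech²` and `φ'(ξ) = sech²(ξ)`. -/
theorem Vphi_solves (ε : ℝ) (hε : 0 ≤ ε) :
    ∀ ξ : ℝ,
      -(deriv (deriv (fun x : ℝ =>
          -(1/2) * (1 + 2*ε^2) + (3/2) * ε^2 * (1 / Real.cosh x) ^ 2)) ξ)
        - 2 * (1 / Real.cosh ξ) ^ 2 *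
            (-(1/2) * (1 + 2*ε^2) + (3/2) * ε^2 * (1 / Real.cosh ξ) ^ 2)
      = (1 / Real.cosh ξ) ^ 2
        - ε^2 * deriv (deriv (fun x : ℝ => (1 / Real.cosh x) ^ 2)) ξ :=
  Vphi_solves_general ε
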